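/- arXiv:1807.00580 — 3 statements merged into one kernel-verified Lean document; each statement's English description precedes it below -/
import Mathlib

section
/- For every generalized Petersen graph GP(n,k) with n ≥ 3 and 1 ≤ k < n/2, the edge metric dimension satisfies β_E(GP(n,k)) ≥ 3. -/
open SimpleGraph

/-- Distance from a vertex to an edge: `d(w,e) = min over endpoints`. -/
noncomputable def edgeDist {V : Type*} (G : SimpleGraph V) (w : V) (e : Sym2 V) : ℕ :=
  Sym2.lift ⟨fun x y => min (G.dist w x) (G.dist w y), fun x y => min_comm _ _⟩ e

/-- `S` is an edge metric generator: distinct edges get distinct distance vectors. -/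
def IsEdgeGenerator {V : Type*} (G : SimpleGraph V) (S : Set V) : Prop :=
  ∀ e₁ ∈ G.edgeSet, ∀ e₂ ∈ G.edgeSet,
    (∀ w ∈ S, edgeDist G w e₁ = edgeDist G w e₂) → e₁ = e₂

/-- The edge metric dimension: minimum cardinality of an edge metric generator. -/
noncomputable def edgeMetricDim {V : Type*} (G : SimpleGraph V) : ℕ :=
  sInf {n | ∃ S : Set V, S.Finite ∧ S.ncard = n ∧ IsEdgeGenerator G S}

/-- `S` resolves all pairs of vertices. -/
def IsResolving {V : Type*} (G : SimpleGraph V) (S : Set V) : Prop :=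
  ∀ x y : V, (∀ w ∈ S, G.dist w x = G.dist w y) → x = y

/-- The metric dimension. -/
noncomputable def metricDim {V : Type*} (G : SimpleGraph V) : ℕ :=
  sInf {n | ∃ S : Set V, S.Finite ∧ S.ncard = n ∧ IsResolving G S}

/-- The generalized Petersen graph `GP n k`: outer vertices `Sum.inl i` (the `uᵢ`),
inner vertices `Sum.inr i` (the `vᵢ`). -/
def GP (n k : ℕ) : SimpleGraph (Fin n ⊕ Fin n) :=
  SimpleGraph.fromRel (fun a b =>
    match a, b with
    | Sum.inl i, Sum.inl j => (j : ℕ) = ((i : ℕ) + 1) % n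
    | Sum.inl i, Sum.inr j => i = j
    | Sum.inr i, Sum.inr j => (j : ℕ) = ((i : ℕ) + k) % n
    | _, _ => False)

/-!
Every edge `x p` at a vertex `x` is at distance `0` from `x`, and at distance `d(y, x) - 1` or
`d(y, x)` from any other vertex `y`. So the edges at a vertex of degree at least three cannot all
be told apart by a pair `{x, y}`, by pigeonhole; in `GP(n, k)` every vertex has three neighbours.
-/

section EdgeMetric

variable {V : Type*} {G : SimpleGraph V}

lemma edgeDist_mk (w x y : V) : edgeDist G w s(x, y) = min (G.dist w x) (G.dist w y) := rfl

lemma edgeDist_eq_zero_iff (hconn : G.Connected) {w : V} {e : Sym2 V} :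
    edgeDist G w e = 0 ↔ w ∈ e := by
  induction e using Sym2.ind with
  | _ x y => simp [edgeDist_mk, hconn.dist_eq_zero_iff]

lemma edgeDist_mem_of_adj {x p : V} (hp : G.Adj x p) (y : V) :
    edgeDist G y s(x, p) ∈ ({G.dist y x - 1, G.dist y x} : Set ℕ) := by
  rw [edgeDist_mk]
  have := hp.diff_dist_adj (u := y)
  simp only [Set.mem_insert_iff, Set.mem_singleton_iff]
  omega

lemma IsEdgeGenerator.mono {S T : Set V} (hST : S ⊆ T) (hS : IsEdgeGenerator G S) :
    IsEdgeGenerator G T :=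
  fun e₁ h₁ e₂ h₂ h ↦ hS e₁ h₁ e₂ h₂ fun w hw ↦ h w (hST hw)

lemma isEdgeGenerator_univ (hconn : G.Connected) : IsEdgeGenerator G Set.univ :=
  fun e₁ _ e₂ _ h ↦ Sym2.ext fun w ↦ by
    rw [← edgeDist_eq_zero_iff hconn, h w trivial, edgeDist_eq_zero_iff hconn]

lemma not_isEdgeGenerator_pair {x : V} (hx : 2 < (G.neighborSet x).ncard) (y : V) :
    ¬ IsEdgeGenerator G {x, y} := by
  intro hgen
  obtain ⟨p, hp, q, hq, hpq, hdist⟩ :=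
    Set.exists_ne_map_eq_of_ncard_lt_of_maps_to (s := G.neighborSet x)
      ((Set.ncard_insert_le _ _).trans_lt (by simpa using hx))
      (fun p hp ↦ edgeDist_mem_of_adj hp y)
  refine hpq (Sym2.congr_right.mp (hgen _ hp _ hq ?_))
  rintro w (rfl | rfl)
  · simp [edgeDist_mk]
  · exact hdist

lemma Set.exists_subset_pair_of_ncard_le_two [Nonempty V] {S : Set V} (hS : S.Finite)
    (h : S.ncard ≤ 2) : ∃ x y : V, S ⊆ {x, y} := by
  interval_cases hc : S.ncard
  · obtain ⟨x⟩ := ‹Nonempty V›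
    exact ⟨x, x, by simp [(Set.ncard_eq_zero hS).mp hc]⟩
  · obtain ⟨x, rfl⟩ := Set.ncard_eq_one.mp hc
    exact ⟨x, x, by simp⟩
  · obtain ⟨x, y, -, rfl⟩ := Set.ncard_eq_two.mp hc
    exact ⟨x, y, subset_rfl⟩

theorem three_le_edgeMetricDim [Finite V] (hconn : G.Connected)
    (hdeg : ∀ x, 2 < (G.neighborSet x).ncard) : 3 ≤ edgeMetricDim G := by
  have : Nonempty V := hconn.nonempty
  refine le_csInf ⟨_, Set.univ, Set.finite_univ, rfl, isEdgeGenerator_univ hconn⟩ ?_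
  rintro _ ⟨S, hfin, rfl, hgen⟩
  by_contra! hS
  obtain ⟨x, y, hxy⟩ := Set.exists_subset_pair_of_ncard_le_two hfin (by omega)
  exact not_isEdgeGenerator_pair (hdeg x) y (hgen.mono hxy)

end EdgeMetric

lemma Fin.add_ne_sub_of_two_mul_lt {n : ℕ} [NeZero n] {c : Fin n} (hc : 0 < (c : ℕ))
    (hcn : 2 * (c : ℕ) < n) (i : Fin n) : i + c ≠ i - c := by
  intro h
  have hcc : ((c + c : Fin n) : ℕ) = 0 := by
    rw [eq_neg_iff_add_eq_zero.mp (add_left_cancel (h.trans (sub_eq_add_neg i c))), Fin.val_zero]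
  rw [Fin.val_add, Nat.mod_eq_of_lt (by omega)] at hcc
  omega

namespace GP

variable {n k : ℕ}

/-- Adjacency on the cycle `ℤ/n` with step `c`; both rims of `GP n k` are of this form. -/
def IsStepAdj (c : ℕ) (i j : Fin n) : Prop :=
  i ≠ j ∧ ((j : ℕ) = (i + c) % n ∨ (i : ℕ) = (j + c) % n)

lemma isStepAdj_add [NeZero n] {c : Fin n} (hc : 0 < (c : ℕ)) (i : Fin n) :
    IsStepAdj c i (i + c) :=
  ⟨fun h ↦ (Fin.pos_iff_ne_zero.mp hc) (left_eq_add.mp h), .inl (Fin.val_add _ _)⟩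

lemma isStepAdj_sub [NeZero n] {c : Fin n} (hc : 0 < (c : ℕ)) (i : Fin n) :
    IsStepAdj c i (i - c) :=
  ⟨fun h ↦ (Fin.pos_iff_ne_zero.mp hc) (sub_eq_self.mp h.symm),
    .inr (by rw [← Fin.val_add, sub_add_cancel])⟩

lemma adj_inl_inl {i j : Fin n} : (GP n k).Adj (.inl i) (.inl j) ↔ IsStepAdj 1 i j := by
  simp [GP, IsStepAdj]

lemma adj_inl_inr {i j : Fin n} : (GP n k).Adj (.inl i) (.inr j) ↔ i = j := by
  simp [GP]

lemma adj_inr_inr {i j : Fin n} : (GP n k).Adj (.inr i) (.inr j) ↔ IsStepAdj k i j := by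
  simp [GP, IsStepAdj]

lemma connected (hn : 0 < n) : (GP n k).Connected := by
  have outer : ∀ m (hm : m < n), (GP n k).Reachable (.inl ⟨0, hn⟩) (.inl ⟨m, hm⟩) := by
    intro m
    induction m with
    | zero => exact fun _ ↦ .rfl
    | succ m ih =>
      refine fun hm ↦ (ih (by omega)).trans (Adj.reachable ?_)
      rw [adj_inl_inl]
      simp [IsStepAdj, Nat.mod_eq_of_lt hm]
  have all : ∀ v, (GP n k).Reachable (.inl ⟨0, hn⟩) v
    | .inl i => outer i i.isLt
    | .inr i => (outer i i.isLt).trans (adj_inl_inr.mpr rfl).reachable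
  have : Nonempty (Fin n ⊕ Fin n) := ⟨.inl ⟨0, hn⟩⟩
  exact ⟨fun u v ↦ (all u).symm.trans (all v)⟩

lemma two_lt_ncard_neighborSet (hk : 0 < k) (hkn : 2 * k < n) (x : Fin n ⊕ Fin n) :
    2 < ((GP n k).neighborSet x).ncard := by
  have : NeZero n := ⟨by omega⟩
  rw [Set.two_lt_ncard_iff]
  simp only [mem_neighborSet]
  cases x with
  | inl i =>
    let c : Fin n := ⟨1, by omega⟩
    have hc : 0 < (c : ℕ) := one_pos
    exact ⟨.inl (i + c), .inl (i - c), .inr i, adj_inl_inl.mpr (isStepAdj_add hc i),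
      adj_inl_inl.mpr (isStepAdj_sub hc i), adj_inl_inr.mpr rfl,
      Sum.inl_injective.ne (Fin.add_ne_sub_of_two_mul_lt hc (show 2 * 1 < n by omega) i),
      Sum.inl_ne_inr, Sum.inl_ne_inr⟩
  | inr i =>
    let c : Fin n := ⟨k, by omega⟩
    exact ⟨.inr (i + c), .inr (i - c), .inl i, adj_inr_inr.mpr (isStepAdj_add hk i),
      adj_inr_inr.mpr (isStepAdj_sub hk i), (adj_inl_inr.mpr rfl).symm,
      Sum.inr_injective.ne (Fin.add_ne_sub_of_two_mul_lt hk hkn i),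
      Sum.inr_ne_inl, Sum.inr_ne_inl⟩

end GP

theorem stmt3_general (n k : ℕ) (hk1 : 1 ≤ k) (hk2 : 2 * k < n) :
    3 ≤ edgeMetricDim (GP n k) :=
  three_le_edgeMetricDim (GP.connected (by omega)) (GP.two_lt_ncard_neighborSet hk1 hk2)

/-- For every generalized Petersen graph `GP(n,k)`, `β_E ≥ 3`. -/
theorem stmt3 (n k : ℕ) (hn : 3 ≤ n) (hk1 : 1 ≤ k) (hk2 : 2 * k < n) :
    3 ≤ edgeMetricDim (GP n k) :=
  stmt3_general n k hk1 hk2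
end

section
/- For n ≥ 3, the set {u_0, u_1, v_0} is an edge metric generator of the prism graph GP(n,1); that is, every two distinct edges of GP(n,1) are distinguished by their distances to some vertex in {u_0, u_1, v_0}. -/
open SimpleGraph

/-!
`GP n 1` is the prism `Cₙ □ K₂`, and the distance from a vertex `w` is the potential `prismDist`:
the cycle distance of the indices, plus one when the side changes. This is proved by checking that
the potential vanishes at `w`, changes by at most one along edges, and strictly decreases along
some edge at every other vertex.

Consequently `d(v₀, e) - d(u₀, e)` is `+1`, `0` or `-1` according as `e` is an outer rim edge, a
spoke or an inner rim edge, so `u₀` and `v₀` tell the kind of an edge apart. Within one kind the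
distances from the adjacent vertices `u₀` and `u₁` determine the index, as the cycle distances
from `0` and `1` resolve the vertices and (for `n ≥ 3`) the edges of `Cₙ`.
-/

open Sum

namespace SimpleGraph

variable {V : Type*} {G : SimpleGraph V}

theorem le_dist_of_adj_le_add_one {f : V → ℕ} {w x : V} (hw : f w = 0)
    (hf : ∀ ⦃x y⦄, G.Adj x y → f y ≤ f x + 1) (hx : G.Reachable w x) : f x ≤ G.dist w x := by
  obtain ⟨p, hp⟩ := hx.exists_walk_length_eq_dist
  suffices ∀ {a b : V} (q : G.Walk a b), f b ≤ f a + q.length by have := this p; omega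
  intro a b q
  induction q with
  | nil => simp
  | cons h _ _ => have := hf h; simp only [Walk.length_cons]; omega

theorem reachable_and_dist_le_of_exists_adj_lt {f : V → ℕ} {w : V}
    (hf : ∀ x ≠ w, ∃ y, G.Adj x y ∧ f y < f x) (x : V) :
    G.Reachable w x ∧ G.dist w x ≤ f x := by
  induction hx : f x using Nat.strong_induction_on generalizing x with
  | _ k ih =>
  by_cases hxw : x = w
  · subst hxw; simp
  obtain ⟨y, hxy, hy⟩ := hf x hxw
  obtain ⟨hr, hd⟩ := ih (f y) (hx ▸ hy) y rfl
  have htri := hxy.symm.reachable.dist_triangle_right w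
  rw [dist_eq_one_iff_adj.mpr hxy.symm] at htri
  exact ⟨hr.trans hxy.symm.reachable, by omega⟩

theorem dist_eq_of_adj_le_add_one_of_exists_adj_lt {f : V → ℕ} {w : V} (hw : f w = 0)
    (hf : ∀ ⦃x y⦄, G.Adj x y → f y ≤ f x + 1) (hdesc : ∀ x ≠ w, ∃ y, G.Adj x y ∧ f y < f x)
    (x : V) : G.dist w x = f x :=
  have h := reachable_and_dist_le_of_exists_adj_lt hdesc x
  le_antisymm h.2 (le_dist_of_adj_le_add_one hw hf h.1)

end SimpleGraph

theorem Nat.add_one_mod_eq_or {i n : ℕ} (hi : i < n) :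
    (i + 1) % n = i + 1 ∧ i + 1 < n ∨ (i + 1) % n = 0 ∧ i + 1 = n := by
  rcases Nat.lt_or_ge (i + 1) n with h | h
  · exact .inl ⟨Nat.mod_eq_of_lt h, h⟩
  · obtain rfl : i + 1 = n := by omega
    exact .inr ⟨Nat.mod_self _, rfl⟩

def cycDist (n i j : ℕ) : ℕ := min (Nat.dist i j) (n - Nat.dist i j)

section cycDist

variable {n a i j : ℕ}

@[simp] theorem cycDist_self : cycDist n i i = 0 := by simp [cycDist]

theorem cycDist_le_add_one (ha : a < n) (hi : i < n) (hj : j < n)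
    (h : j = (i + 1) % n ∨ i = (j + 1) % n) : cycDist n a j ≤ cycDist n a i + 1 := by
  have := Nat.add_one_mod_eq_or hi
  have := Nat.add_one_mod_eq_or hj
  unfold cycDist Nat.dist
  omega

theorem exists_cycDist_lt (ha : a < n) (hj : j < n) (haj : a ≠ j) :
    ∃ k < n, j ≠ k ∧ (k = (j + 1) % n ∨ j = (k + 1) % n) ∧ cycDist n a k < cycDist n a j := by
  unfold cycDist Nat.dist
  -- step backwards exactly when `a` lies within half a turn behind `j`
  by_cases hback : a < j ∧ 2 * (j - a) ≤ n ∨ j < a ∧ n < 2 * (a - j)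
  · have hpred : (if j = 0 then n - 1 else j - 1) < n := by split_ifs <;> omega
    refine ⟨_, hpred, ?_⟩
    have := Nat.add_one_mod_eq_or hpred
    split_ifs at this ⊢ <;> omega
  · have := Nat.add_one_mod_eq_or hj
    exact ⟨(j + 1) % n, Nat.mod_lt _ (by omega), by omega⟩

theorem eq_of_cycDist_zero_eq_of_cycDist_one_eq (hi : i < n) (hj : j < n)
    (h₀ : cycDist n 0 i = cycDist n 0 j) (h₁ : cycDist n 1 i = cycDist n 1 j) : i = j := by
  unfold cycDist Nat.dist at h₀ h₁
  omega

theorem min_cycDist_zero_add_one_mod (hi : i < n) :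
    min (cycDist n 0 i) (cycDist n 0 ((i + 1) % n)) = min i (n - 1 - i) := by
  have := Nat.add_one_mod_eq_or hi
  unfold cycDist Nat.dist
  omega

theorem min_cycDist_one_add_one_mod (hi : i < n) :
    min (cycDist n 1 i) (cycDist n 1 ((i + 1) % n)) = min (i - 1) (n - i) := by
  have := Nat.add_one_mod_eq_or hi
  unfold cycDist Nat.dist
  omega

theorem eq_of_min_cycDist_zero_eq_of_min_cycDist_one_eq (hn : 3 ≤ n) (hi : i < n) (hj : j < n)
    (h₀ : min (cycDist n 0 i) (cycDist n 0 ((i + 1) % n)) =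
      min (cycDist n 0 j) (cycDist n 0 ((j + 1) % n)))
    (h₁ : min (cycDist n 1 i) (cycDist n 1 ((i + 1) % n)) =
      min (cycDist n 1 j) (cycDist n 1 ((j + 1) % n))) : i = j := by
  rw [min_cycDist_zero_add_one_mod hi, min_cycDist_zero_add_one_mod hj] at h₀
  rw [min_cycDist_one_add_one_mod hi, min_cycDist_one_add_one_mod hj] at h₁
  omega

end cycDist

def prismDist (n : ℕ) : Fin n ⊕ Fin n → Fin n ⊕ Fin n → ℕ
  | inl i, inl j | inr i, inr j => cycDist n i j
  | inl i, inr j | inr i, inl j => cycDist n i j + 1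

def cycSucc {n : ℕ} (i : Fin n) : Fin n := ⟨(i + 1) % n, Nat.mod_lt _ i.pos⟩

section prism

variable {n : ℕ}

@[simp] theorem val_cycSucc (i : Fin n) : (cycSucc i : ℕ) = (i + 1) % n := rfl

theorem prismDist_le_of_adj (w : Fin n ⊕ Fin n) {x y : Fin n ⊕ Fin n} (h : (GP n 1).Adj x y) :
    prismDist n w y ≤ prismDist n w x + 1 := by
  rcases w with a | a <;> rcases x with i | i <;> rcases y with j | j <;>
    simp only [GP, fromRel_adj, ne_eq, inl.injEq, inr.injEq, reduceCtorEq, not_false_eq_true,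
      false_or, or_false, true_and] at h <;>
    simp only [prismDist]
  all_goals first
    | (subst h; omega)
    | have := cycDist_le_add_one a.isLt i.isLt j.isLt h.2; omega

theorem exists_adj_prismDist_lt {w x : Fin n ⊕ Fin n} (hx : x ≠ w) :
    ∃ y, (GP n 1).Adj x y ∧ prismDist n w y < prismDist n w x := by
  rcases w with a | a <;> rcases x with j | j
  · obtain ⟨k, hk, hjk, hadj, hlt⟩ :=
      exists_cycDist_lt a.isLt j.isLt fun h => hx (congrArg inl (Fin.ext h.symm))
    exact ⟨inl ⟨k, hk⟩, by simp [GP, Fin.ext_iff, hjk, hadj], hlt⟩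
  · exact ⟨inl j, by simp [GP], by simp [prismDist]⟩
  · exact ⟨inr j, by simp [GP], by simp [prismDist]⟩
  · obtain ⟨k, hk, hjk, hadj, hlt⟩ :=
      exists_cycDist_lt a.isLt j.isLt fun h => hx (congrArg inr (Fin.ext h.symm))
    exact ⟨inr ⟨k, hk⟩, by simp [GP, Fin.ext_iff, hjk, hadj], hlt⟩

theorem dist_GP_one (x y : Fin n ⊕ Fin n) : (GP n 1).dist x y = prismDist n x y :=
  dist_eq_of_adj_le_add_one_of_exists_adj_lt (by cases x <;> simp [prismDist])
    (fun _ _ => prismDist_le_of_adj x) (fun _ => exists_adj_prismDist_lt) y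

theorem exists_eq_of_mem_edgeSet_GP_one {e : Sym2 (Fin n ⊕ Fin n)} (he : e ∈ (GP n 1).edgeSet) :
    ∃ i : Fin n,
      e = s(inl i, inl (cycSucc i)) ∨ e = s(inl i, inr i) ∨ e = s(inr i, inr (cycSucc i)) := by
  induction e using Sym2.ind with | _ x y => ?_
  rw [mem_edgeSet] at he
  rcases x with i | i <;> rcases y with j | j <;>
    simp only [GP, fromRel_adj, ne_eq, inl.injEq, inr.injEq, reduceCtorEq, not_false_eq_true,
      false_or, or_false, true_and] at he
  · rcases he.2 with h | h
    · exact ⟨i, .inl (by rw [show j = cycSucc i from Fin.ext h])⟩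
    · exact ⟨j, .inl (by rw [show i = cycSucc j from Fin.ext h, Sym2.eq_swap])⟩
  · exact ⟨i, .inr (.inl (by rw [he]))⟩
  · exact ⟨j, .inr (.inl (by rw [he, Sym2.eq_swap]))⟩
  · rcases he.2 with h | h
    · exact ⟨i, .inr (.inr (by rw [show j = cycSucc i from Fin.ext h]))⟩
    · exact ⟨j, .inr (.inr (by rw [show i = cycSucc j from Fin.ext h, Sym2.eq_swap]))⟩

end prism

/-- `{u₀, u₁, v₀}` is an edge metric generator of `GP(n,1)` for `n ≥ 3`. -/
theorem stmt5 (n : ℕ) (hn : 3 ≤ n) :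
    IsEdgeGenerator (GP n 1)
      {Sum.inl ⟨0, by omega⟩, Sum.inl ⟨1, by omega⟩, Sum.inr ⟨0, by omega⟩} := by
  intro e₁ he₁ e₂ he₂ h
  have hu₀ := h (inl ⟨0, by omega⟩) (by simp)
  have hu₁ := h (inl ⟨1, by omega⟩) (by simp)
  have hv₀ := h (inr ⟨0, by omega⟩) (by simp)
  obtain ⟨i, rfl | rfl | rfl⟩ := exists_eq_of_mem_edgeSet_GP_one he₁ <;>
  obtain ⟨j, rfl | rfl | rfl⟩ := exists_eq_of_mem_edgeSet_GP_one he₂ <;>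
  simp only [edgeDist, Sym2.lift_mk, dist_GP_one, prismDist, val_cycSucc, Nat.add_min_add_right,
    Nat.add_right_cancel_iff, le_add_iff_nonneg_right, zero_le, inf_of_le_left, inf_of_le_right]
    at hu₀ hu₁ hv₀
  · rw [Fin.ext (eq_of_min_cycDist_zero_eq_of_min_cycDist_one_eq hn i.isLt j.isLt hu₀ hu₁)]
  · omega
  · omega
  · omega
  · rw [Fin.ext (eq_of_cycDist_zero_eq_of_cycDist_one_eq i.isLt j.isLt hu₀ hu₁)]
  · omega
  · omega
  · omega
  · rw [Fin.ext (eq_of_min_cycDist_zero_eq_of_min_cycDist_one_eq hn i.isLt j.isLt hu₀ hu₁)]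
end

section
/- For even n = 2t (t ≥ 2), the edge metric dimension of GP(n,1) equals its metric dimension, both being 3; for odd n = 2t+1 (t ≥ 1), β_E(GP(n,1)) = 3 > β(GP(n,1)) = 2. -/
open SimpleGraph

/-!
The distance in `GP(n,1)` from `(s,i)` to `(t,j)` is the cyclic distance between `i` and `j` plus
one if the sides `s, t` differ: this function vanishes at the target, changes by at most one along
an edge, and strictly decreases along some edge at every other vertex, so it is the graph distance.

Every vertex `a` has three neighbours. The three edges at `a` are at distance `0` from `a` and at
distance `d(b,a)` or `d(b,a) - 1` from any `b`, so no pair `{a, b}` resolves the edges. For even `n`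
the prism is bipartite, so the three neighbours of `a` are at distance `d(b,a) ± 1` from `b`, and no
pair resolves the vertices either. Conversely `{u₀, u₁, v₀}` resolves vertices and edges:
`d(u₀, ·) - d(v₀, ·)` is `-1` on the outer cycle, `1` on the inner one and `0` on the spokes, and
the distances to `u₀` and `u₁` then locate the position along the cycle. For `n = 2c + 1` the
pair `{u₀, u_c}` already resolves the vertices, because `d(u₀, x) + d(u_c, x)` is `c` or `c + 1`
on the outer cycle and two more on the inner one.
-/

namespace SimpleGraph

variable {V : Type*} {G : SimpleGraph V}

section Potential

variable {f : V → ℕ} {v : V}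

lemma Walk.le_add_length_of_adj_le (hf : ∀ x y, G.Adj x y → f x ≤ f y + 1) {u w : V}
    (p : G.Walk u w) : f u ≤ f w + p.length := by
  induction p with
  | nil => simp
  | cons h p ih => have := hf _ _ h; rw [Walk.length_cons]; omega

lemma exists_walk_length_le_of_exists_adj_lt (hf : ∀ x ≠ v, ∃ y, G.Adj x y ∧ f y < f x)
    (u : V) : ∃ p : G.Walk u v, p.length ≤ f u := by
  induction hu : f u using Nat.strong_induction_on generalizing u with
  | _ k ih =>
    by_cases huv : u = v
    · subst huv
      exact ⟨Walk.nil, by simp⟩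
    obtain ⟨y, hy, hlt⟩ := hf u huv
    obtain ⟨p, hp⟩ := ih (f y) (hu ▸ hlt) y rfl
    exact ⟨Walk.cons hy p, by rw [Walk.length_cons]; omega⟩

theorem dist_eq_of_adj_le_of_exists_adj_lt (hv : f v = 0)
    (hle : ∀ x y, G.Adj x y → f x ≤ f y + 1) (hlt : ∀ x ≠ v, ∃ y, G.Adj x y ∧ f y < f x)
    (u : V) : G.dist u v = f u := by
  obtain ⟨p, hp⟩ := exists_walk_length_le_of_exists_adj_lt hlt u
  obtain ⟨q, hq⟩ := Reachable.exists_walk_length_eq_dist ⟨p⟩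
  have := q.le_add_length_of_adj_le hle
  have := dist_le p
  omega

end Potential

lemma IsResolving.mono {S T : Set V} (h : IsResolving G S) (hST : S ⊆ T) : IsResolving G T :=
  fun x y hxy => h x y fun w hw => hxy w (hST hw)

lemma IsEdgeGenerator.mono {S T : Set V} (h : IsEdgeGenerator G S) (hST : S ⊆ T) :
    IsEdgeGenerator G T :=
  fun e₁ h₁ e₂ h₂ he => h e₁ h₁ e₂ h₂ fun w hw => he w (hST hw)

lemma not_isResolving_singleton {a x y : V} (hx : G.Adj a x) (hy : G.Adj a y) (hxy : x ≠ y) :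
    ¬IsResolving G {a} := fun h =>
  hxy <| h x y fun w hw => by
    rw [Set.mem_singleton_iff.1 hw, dist_eq_one_iff_adj.2 hx, dist_eq_one_iff_adj.2 hy]

theorem not_isResolving_pair {a x y z : V} (hx : G.Adj a x) (hy : G.Adj a y) (hz : G.Adj a z)
    (hxy : x ≠ y) (hxz : x ≠ z) (hyz : y ≠ z) (b : V)
    (hb : ∀ w, G.Adj a w → G.dist b w ≠ G.dist b a) : ¬IsResolving G {a, b} := by
  intro h
  have hres : ∀ w w', G.Adj a w → G.Adj a w' → G.dist b w = G.dist b w' → w = w' :=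
    fun w w' hw hw' hbw => h w w' <| by
      rintro c (rfl | rfl)
      · rw [dist_eq_one_iff_adj.2 hw, dist_eq_one_iff_adj.2 hw']
      · exact hbw
  have hdist : ∀ w, G.Adj a w → G.dist b w = G.dist b a + 1 ∨ G.dist b w = G.dist b a - 1 :=
    fun w hw => by have := hw.diff_dist_adj (u := b); have := hb w hw; omega
  have := hdist x hx; have := hdist y hy; have := hdist z hz
  obtain hxy' | hxz' | hyz' : G.dist b x = G.dist b y ∨ G.dist b x = G.dist b z ∨
      G.dist b y = G.dist b z := by omega
  exacts [hxy (hres x y hx hy hxy'), hxz (hres x z hx hz hxz'), hyz (hres y z hy hz hyz')]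

theorem not_isEdgeGenerator_pair {a x y z : V} (hx : G.Adj a x) (hy : G.Adj a y)
    (hz : G.Adj a z) (hxy : x ≠ y) (hxz : x ≠ z) (hyz : y ≠ z) (b : V) :
    ¬IsEdgeGenerator G {a, b} := by
  intro h
  have hgen : ∀ w w', G.Adj a w → G.Adj a w' →
      edgeDist G b s(a, w) = edgeDist G b s(a, w') → w = w' :=
    fun w w' hw hw' hbw => Sym2.congr_right.1 <| h _ hw _ hw' <| by
      rintro c (rfl | rfl)
      · simp [edgeDist]
      · exact hbw
  have hdist : ∀ w, G.Adj a w →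
      edgeDist G b s(a, w) = G.dist b a ∨ edgeDist G b s(a, w) = G.dist b a - 1 :=
    fun w hw => by have := hw.diff_dist_adj (u := b); simp only [edgeDist, Sym2.lift_mk]; omega
  have := hdist x hx; have := hdist y hy; have := hdist z hz
  obtain hxy' | hxz' | hyz' : edgeDist G b s(a, x) = edgeDist G b s(a, y) ∨
      edgeDist G b s(a, x) = edgeDist G b s(a, z) ∨
      edgeDist G b s(a, y) = edgeDist G b s(a, z) := by omega
  exacts [hxy (hgen x y hx hy hxy'), hxz (hgen x z hx hz hxz'), hyz (hgen y z hy hz hyz')]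

end SimpleGraph

section ncard

variable {α : Type*} {P : Set α → Prop}

lemma sInf_ncard_eq_of_forall_le {S : Set α} {k : ℕ} (hS : S.Finite) (hk : S.ncard = k)
    (hPS : P S) (hmin : ∀ T : Set α, T.Finite → P T → k ≤ T.ncard) :
    sInf {m | ∃ T : Set α, T.Finite ∧ T.ncard = m ∧ P T} = k :=
  le_antisymm (Nat.sInf_le ⟨S, hS, hk, hPS⟩)
    (le_csInf ⟨k, S, hS, hk, hPS⟩ fun _ ⟨T, hT, hm, hPT⟩ => hm ▸ hmin T hT hPT)

variable [Nonempty α] {T : Set α}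

lemma two_le_ncard_of_forall_not_singleton (hP : ∀ S T : Set α, S ⊆ T → P S → P T)
    (h : ∀ a, ¬P {a}) (hT : T.Finite) (hPT : P T) : 2 ≤ T.ncard := by
  by_contra! hlt
  obtain ⟨a, ha⟩ := (Set.ncard_le_one_iff_subset_singleton hT).1 (by omega)
  exact h a (hP T _ ha hPT)

lemma three_le_ncard_of_forall_not_pair (hP : ∀ S T : Set α, S ⊆ T → P S → P T)
    (h : ∀ a b, ¬P {a, b}) (hT : T.Finite) (hPT : P T) : 3 ≤ T.ncard := by
  by_contra! hlt
  obtain hle | h2 : T.ncard ≤ 1 ∨ T.ncard = 2 := by omega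
  · obtain ⟨a, ha⟩ := (Set.ncard_le_one_iff_subset_singleton hT).1 hle
    exact h a a (hP T _ (by simpa using ha) hPT)
  · obtain ⟨a, b, -, rfl⟩ := Set.ncard_eq_two.1 h2
    exact h a b hPT

end ncard

namespace Fin

variable {n : ℕ} [NeZero n]

lemma val_add_one_eq_ite (i : Fin n) :
    ((i + 1 : Fin n) : ℕ) = if (i : ℕ) + 1 = n then 0 else (i : ℕ) + 1 := by
  rw [Fin.val_add, Fin.val_one', Nat.add_mod_mod]
  have := i.isLt
  split_ifs with h
  · rw [h, Nat.mod_self]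
  · exact Nat.mod_eq_of_lt (by omega)

lemma val_one_of_two_le (hn : 2 ≤ n) : ((1 : Fin n) : ℕ) = 1 := by
  rw [Fin.val_one', Nat.mod_eq_of_lt (by omega)]

lemma zero_ne_one_of_two_le (hn : 2 ≤ n) : (0 : Fin n) ≠ 1 :=
  Fin.ne_of_val_ne (by rw [val_one_of_two_le hn]; simp)

lemma add_one_ne_sub_one (hn : 3 ≤ n) (i : Fin n) : i + 1 ≠ i - 1 := by
  obtain ⟨k, rfl⟩ : ∃ k, k + 1 = i := ⟨i - 1, sub_add_cancel i 1⟩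
  rw [add_sub_cancel_right, Ne, Fin.ext_iff]
  have := val_add_one_eq_ite k; have := val_add_one_eq_ite (k + 1); have := k.isLt
  split_ifs at * <;> omega

end Fin

namespace Prism

variable {n : ℕ}

/-- The vertex `uᵢ` for `s = false` and `vᵢ` for `s = true`. -/
def vtx (s : Bool) (i : Fin n) : Fin n ⊕ Fin n := cond s (.inr i) (.inl i)

@[simp] lemma vtx_inj {s t : Bool} {i j : Fin n} : vtx s i = vtx t j ↔ s = t ∧ i = j := by
  cases s <;> cases t <;> simp [vtx]

lemma exists_eq_vtx (x : Fin n ⊕ Fin n) : ∃ s i, x = vtx s i := by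
  rcases x with i | i
  exacts [⟨false, i, rfl⟩, ⟨true, i, rfl⟩]

lemma eq_of_add_ite_eq {s t : Bool} {a b : ℕ}
    (h₀ : (a + if false = s then 0 else 1) = b + if false = t then 0 else 1)
    (h₁ : (a + if true = s then 0 else 1) = b + if true = t then 0 else 1) : s = t := by
  cases s <;> cases t <;>
    simp only [Bool.false_eq_true, Bool.true_eq_false, ↓reduceIte] at h₀ h₁ ⊢ <;> omega

def cycDist (i j : Fin n) : ℕ := min (Nat.dist i j) (n - Nat.dist i j)

def prismDist (x y : Fin n ⊕ Fin n) : ℕ :=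
  cycDist (Sum.elim id id x) (Sum.elim id id y) + if x.isRight = y.isRight then 0 else 1

@[simp] lemma prismDist_vtx (s t : Bool) (i j : Fin n) :
    prismDist (vtx s i) (vtx t j) = cycDist i j + if s = t then 0 else 1 := by
  cases s <;> cases t <;> rfl

variable [NeZero n]

lemma adj_vtx_iff (hn : 2 ≤ n) {s t : Bool} {i j : Fin n} :
    (GP n 1).Adj (vtx s i) (vtx t j) ↔ (s = t ∧ (j = i + 1 ∨ i = j + 1)) ∨ (s ≠ t ∧ i = j) := by
  have hsucc (a b : Fin n) : (b : ℕ) = ((a : ℕ) + 1) % n ↔ b = a + 1 := by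
    rw [Fin.ext_iff, Fin.val_add, Fin.val_one', Nat.add_mod_mod]
  have hne (a : Fin n) : a ≠ a + 1 := fun h => by
    have := congrArg Fin.val h; rw [Fin.val_add_one_eq_ite] at this; split_ifs at this <;> omega
  cases s <;> cases t <;>
    simp only [GP, vtx, cond_false, cond_true, fromRel_adj, hsucc, eq_comm (a := j), ne_eq,
      Sum.inl.injEq, Sum.inr.injEq, reduceCtorEq, not_true_eq_false, not_false_eq_true,
      Bool.false_eq_true, Bool.true_eq_false, true_and, false_and, or_false, false_or,
      and_iff_right_iff_imp]
  all_goals rintro (rfl | rfl) h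
  exacts [hne i h, hne j h.symm, hne i h, hne j h.symm]

lemma adj_vtx_add_one (hn : 2 ≤ n) (s : Bool) (i : Fin n) :
    (GP n 1).Adj (vtx s i) (vtx s (i + 1)) := by
  simp [adj_vtx_iff hn]

lemma adj_vtx_sub_one (hn : 2 ≤ n) (s : Bool) (i : Fin n) :
    (GP n 1).Adj (vtx s i) (vtx s (i - 1)) := by
  simp [adj_vtx_iff hn]

lemma adj_vtx_not (hn : 2 ≤ n) (s : Bool) (i : Fin n) : (GP n 1).Adj (vtx s i) (vtx (!s) i) := by
  simp [adj_vtx_iff hn]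

lemma cycDist_add_one_le (i j : Fin n) : cycDist (i + 1) j ≤ cycDist i j + 1 := by
  have := Fin.val_add_one_eq_ite i; have := i.isLt; have := j.isLt
  unfold cycDist Nat.dist; split_ifs at * <;> omega

lemma cycDist_le_cycDist_add_one_add_one (i j : Fin n) : cycDist i j ≤ cycDist (i + 1) j + 1 := by
  have := Fin.val_add_one_eq_ite i; have := i.isLt; have := j.isLt
  unfold cycDist Nat.dist; split_ifs at * <;> omega

lemma cycDist_add_one_lt_or_sub_one_lt {i j : Fin n} (h : i ≠ j) :
    cycDist (i + 1) j < cycDist i j ∨ cycDist (i - 1) j < cycDist i j := by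
  obtain ⟨k, rfl⟩ : ∃ k, k + 1 = i := ⟨i - 1, sub_add_cancel i 1⟩
  rw [add_sub_cancel_right]
  have := Fin.val_add_one_eq_ite k; have := Fin.val_add_one_eq_ite (k + 1)
  have := k.isLt; have := j.isLt; have := (k + 1).isLt
  rw [Ne, Fin.ext_iff] at h
  unfold cycDist Nat.dist; split_ifs at * <;> omega

lemma prismDist_le_of_adj (hn : 2 ≤ n) {x y : Fin n ⊕ Fin n} (h : (GP n 1).Adj x y)
    (w : Fin n ⊕ Fin n) : prismDist x w ≤ prismDist y w + 1 := by
  obtain ⟨s, i, rfl⟩ := exists_eq_vtx x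
  obtain ⟨t, j, rfl⟩ := exists_eq_vtx y
  obtain ⟨u, k, rfl⟩ := exists_eq_vtx w
  rw [adj_vtx_iff hn] at h
  rcases h with ⟨rfl, rfl | rfl⟩ | ⟨hst, rfl⟩
  · have := cycDist_le_cycDist_add_one_add_one i k; simp only [prismDist_vtx]; omega
  · have := cycDist_add_one_le j k; simp only [prismDist_vtx]; omega
  · simp only [prismDist_vtx]; split_ifs <;> omega

lemma exists_adj_prismDist_lt (hn : 2 ≤ n) {x w : Fin n ⊕ Fin n} (h : x ≠ w) :
    ∃ y, (GP n 1).Adj x y ∧ prismDist y w < prismDist x w := by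
  obtain ⟨s, i, rfl⟩ := exists_eq_vtx x
  obtain ⟨u, k, rfl⟩ := exists_eq_vtx w
  by_cases hsu : s = u
  · subst hsu
    have hik : i ≠ k := fun hik => h (by rw [hik])
    rcases cycDist_add_one_lt_or_sub_one_lt hik with hlt | hlt
    · exact ⟨vtx s (i + 1), adj_vtx_add_one hn s i, by simpa using hlt⟩
    · exact ⟨vtx s (i - 1), adj_vtx_sub_one hn s i, by simpa using hlt⟩
  · exact ⟨vtx u i, by simp [adj_vtx_iff hn, hsu], by simp [hsu]⟩

theorem dist_eq_prismDist (hn : 2 ≤ n) (x y : Fin n ⊕ Fin n) :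
    (GP n 1).dist x y = prismDist x y :=
  dist_eq_of_adj_le_of_exists_adj_lt (f := (prismDist · y)) (by simp [prismDist, cycDist])
    (fun _ _ h => prismDist_le_of_adj hn h y) (fun _ h => exists_adj_prismDist_lt hn h) x

lemma prismDist_ne_of_adj (hn : 2 ≤ n) (hev : Even n) {x y : Fin n ⊕ Fin n}
    (h : (GP n 1).Adj x y) (w : Fin n ⊕ Fin n) : prismDist x w ≠ prismDist y w := by
  obtain ⟨s, i, rfl⟩ := exists_eq_vtx x
  obtain ⟨t, j, rfl⟩ := exists_eq_vtx y
  obtain ⟨u, k, rfl⟩ := exists_eq_vtx w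
  obtain ⟨m, hm⟩ := hev
  rw [adj_vtx_iff hn] at h
  have := i.isLt; have := j.isLt; have := k.isLt
  rcases h with ⟨rfl, rfl | rfl⟩ | ⟨hst, rfl⟩
  · have := Fin.val_add_one_eq_ite i
    simp only [prismDist_vtx, cycDist, Nat.dist]; split_ifs at * <;> omega
  · have := Fin.val_add_one_eq_ite j
    simp only [prismDist_vtx, cycDist, Nat.dist]; split_ifs at * <;> omega
  · revert hst; cases s <;> cases t <;> cases u <;> simp

lemma eq_of_cycDist_zero_eq_of_cycDist_one_eq (hn : 2 ≤ n) {i j : Fin n}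
    (h₀ : cycDist 0 i = cycDist 0 j) (h₁ : cycDist 1 i = cycDist 1 j) : i = j := by
  have := i.isLt; have := j.isLt
  simp only [cycDist, Nat.dist, Fin.val_zero, Fin.val_one_of_two_le hn] at h₀ h₁
  exact Fin.ext (by omega)

lemma min_cycDist_zero (i : Fin n) :
    min (cycDist 0 i) (cycDist 0 (i + 1)) = min (i : ℕ) (n - 1 - i) := by
  have := i.isLt; have := Fin.val_add_one_eq_ite i
  simp only [cycDist, Nat.dist, Fin.val_zero]
  split_ifs at * <;> omega

-- at `i = 0` the truncated `(i : ℕ) - 1` is `0`, the distance from `1` to the edge `{0, 1}`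
lemma min_cycDist_one (hn : 2 ≤ n) (i : Fin n) :
    min (cycDist 1 i) (cycDist 1 (i + 1)) = min ((i : ℕ) - 1) (n - i) := by
  have := i.isLt; have := Fin.val_add_one_eq_ite i
  simp only [cycDist, Nat.dist, Fin.val_one_of_two_le hn]
  split_ifs at * <;> omega

lemma eq_of_min_cycDist_eq (hn : 3 ≤ n) {i j : Fin n}
    (h₀ : min (cycDist 0 i) (cycDist 0 (i + 1)) = min (cycDist 0 j) (cycDist 0 (j + 1)))
    (h₁ : min (cycDist 1 i) (cycDist 1 (i + 1)) = min (cycDist 1 j) (cycDist 1 (j + 1))) :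
    i = j := by
  have := i.isLt; have := j.isLt
  rw [min_cycDist_zero, min_cycDist_zero] at h₀
  rw [min_cycDist_one (by omega), min_cycDist_one (by omega)] at h₁
  exact Fin.ext (by omega)

lemma eq_of_cycDist_eq_of_two_mul_add_one_eq {c i j : Fin n} (hc : 2 * c.val + 1 = n)
    (h₀ : cycDist 0 i = cycDist 0 j) (h₁ : cycDist c i = cycDist c j) : i = j := by
  have := i.isLt; have := j.isLt
  simp only [cycDist, Nat.dist, Fin.val_zero] at h₀ h₁
  exact Fin.ext (by omega)

lemma cycDist_zero_add_cycDist_le {c : Fin n} (hc : 2 * c.val + 1 = n) (i : Fin n) :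
    c.val ≤ cycDist 0 i + cycDist c i ∧ cycDist 0 i + cycDist c i ≤ c.val + 1 := by
  have := i.isLt
  simp only [cycDist, Nat.dist, Fin.val_zero]
  omega

lemma isResolving_u₀_u₁_v₀ (hn : 2 ≤ n) :
    IsResolving (GP n 1) {vtx false 0, vtx false 1, vtx true 0} := by
  intro x y h
  obtain ⟨s, i, rfl⟩ := exists_eq_vtx x
  obtain ⟨t, j, rfl⟩ := exists_eq_vtx y
  simp only [Set.mem_insert_iff, Set.mem_singleton_iff, forall_eq_or_imp, forall_eq,
    dist_eq_prismDist hn, prismDist_vtx] at h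
  obtain ⟨h₀, h₁, h₀'⟩ := h
  obtain rfl := eq_of_add_ite_eq h₀ h₀'
  simp only [add_left_inj] at h₀ h₁
  rw [eq_of_cycDist_zero_eq_of_cycDist_one_eq hn h₀ h₁]

lemma isResolving_u₀_uc_of_two_mul_add_one_eq (hn : 2 ≤ n) {c : Fin n}
    (hc : 2 * c.val + 1 = n) :
    IsResolving (GP n 1) {vtx false 0, vtx false c} := by
  intro x y h
  obtain ⟨s, i, rfl⟩ := exists_eq_vtx x
  obtain ⟨t, j, rfl⟩ := exists_eq_vtx y
  simp only [Set.mem_insert_iff, Set.mem_singleton_iff, forall_eq_or_imp, forall_eq,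
    dist_eq_prismDist hn, prismDist_vtx] at h
  obtain ⟨h₀, h₁⟩ := h
  have hi := cycDist_zero_add_cycDist_le hc i
  have hj := cycDist_zero_add_cycDist_le hc j
  obtain rfl : s = t := by
    cases s <;> cases t <;>
      simp only [Bool.false_eq_true, Bool.true_eq_false, ↓reduceIte] at h₀ h₁ ⊢ <;> omega
  simp only [add_left_inj] at h₀ h₁
  rw [eq_of_cycDist_eq_of_two_mul_add_one_eq hc h₀ h₁]

lemma eq_ring_or_spoke_of_mem_edgeSet (hn : 2 ≤ n) {e : Sym2 (Fin n ⊕ Fin n)}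
    (he : e ∈ (GP n 1).edgeSet) :
    (∃ s i, e = s(vtx s i, vtx s (i + 1))) ∨ ∃ i, e = s(vtx false i, vtx true i) := by
  induction e using Sym2.ind with
  | _ x y =>
    obtain ⟨s, i, rfl⟩ := exists_eq_vtx x
    obtain ⟨t, j, rfl⟩ := exists_eq_vtx y
    rw [mem_edgeSet, adj_vtx_iff hn] at he
    rcases he with ⟨rfl, rfl | rfl⟩ | ⟨hst, rfl⟩
    · exact .inl ⟨s, i, rfl⟩
    · exact .inl ⟨s, j, Sym2.eq_swap⟩
    · revert hst; cases s <;> cases t <;> simp [Sym2.eq_swap]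

lemma edgeDist_vtx_ring (hn : 2 ≤ n) (t : Bool) (k : Fin n) (s : Bool) (i : Fin n) :
    edgeDist (GP n 1) (vtx t k) s(vtx s i, vtx s (i + 1)) =
      min (cycDist k i) (cycDist k (i + 1)) + if t = s then 0 else 1 := by
  simp only [edgeDist, Sym2.lift_mk, dist_eq_prismDist hn, prismDist_vtx]
  exact Nat.add_min_add_right _ _ _

lemma edgeDist_vtx_spoke (hn : 2 ≤ n) (t : Bool) (k : Fin n) (i : Fin n) :
    edgeDist (GP n 1) (vtx t k) s(vtx false i, vtx true i) = cycDist k i := by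
  cases t <;> simp [edgeDist, dist_eq_prismDist hn]

lemma isEdgeGenerator_u₀_u₁_v₀ (hn : 3 ≤ n) :
    IsEdgeGenerator (GP n 1) {vtx false 0, vtx false 1, vtx true 0} := by
  intro e₁ he₁ e₂ he₂ h
  simp only [Set.mem_insert_iff, Set.mem_singleton_iff, forall_eq_or_imp, forall_eq] at h
  obtain ⟨h₀, h₁, h₀'⟩ := h
  rcases eq_ring_or_spoke_of_mem_edgeSet (by omega) he₁ with ⟨s, i, rfl⟩ | ⟨i, rfl⟩ <;>
    rcases eq_ring_or_spoke_of_mem_edgeSet (by omega) he₂ with ⟨t, j, rfl⟩ | ⟨j, rfl⟩ <;>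
    simp only [edgeDist_vtx_ring (by omega : 2 ≤ n), edgeDist_vtx_spoke (by omega : 2 ≤ n)]
      at h₀ h₁ h₀'
  · obtain rfl := eq_of_add_ite_eq h₀ h₀'
    simp only [add_left_inj] at h₀ h₁
    rw [eq_of_min_cycDist_eq hn h₀ h₁]
  · cases s <;>
      simp only [Bool.false_eq_true, Bool.true_eq_false, ↓reduceIte] at h₀ h₀' <;> omega
  · cases t <;>
      simp only [Bool.false_eq_true, Bool.true_eq_false, ↓reduceIte] at h₀ h₀' <;> omega
  · rw [eq_of_cycDist_zero_eq_of_cycDist_one_eq (by omega) h₀ h₁]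

lemma not_isEdgeGenerator_pair (hn : 3 ≤ n) (a b : Fin n ⊕ Fin n) :
    ¬IsEdgeGenerator (GP n 1) {a, b} := by
  obtain ⟨s, i, rfl⟩ := exists_eq_vtx a
  exact SimpleGraph.not_isEdgeGenerator_pair (adj_vtx_add_one (by omega) s i)
    (adj_vtx_sub_one (by omega) s i) (adj_vtx_not (by omega) s i)
    (by simp [Fin.add_one_ne_sub_one hn]) (by simp) (by simp) b

lemma not_isResolving_pair_of_even (hn : 3 ≤ n) (hev : Even n) (a b : Fin n ⊕ Fin n) :
    ¬IsResolving (GP n 1) {a, b} := by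
  obtain ⟨s, i, rfl⟩ := exists_eq_vtx a
  refine SimpleGraph.not_isResolving_pair (adj_vtx_add_one (by omega) s i)
    (adj_vtx_sub_one (by omega) s i) (adj_vtx_not (by omega) s i)
    (by simp [Fin.add_one_ne_sub_one hn]) (by simp) (by simp) b fun w hw => ?_
  rw [dist_comm, dist_comm (u := b), dist_eq_prismDist (by omega), dist_eq_prismDist (by omega)]
  exact prismDist_ne_of_adj (by omega) hev hw.symm b

lemma not_isResolving_singleton (hn : 3 ≤ n) (a : Fin n ⊕ Fin n) :
    ¬IsResolving (GP n 1) {a} := by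
  obtain ⟨s, i, rfl⟩ := exists_eq_vtx a
  exact SimpleGraph.not_isResolving_singleton (adj_vtx_add_one (by omega) s i)
    (adj_vtx_sub_one (by omega) s i) (by simp [Fin.add_one_ne_sub_one hn])

lemma ncard_u₀_u₁_v₀ (hn : 2 ≤ n) :
    ({vtx false 0, vtx false 1, vtx true 0} : Set (Fin n ⊕ Fin n)).ncard = 3 :=
  Set.ncard_eq_three.2 ⟨_, _, _, by simp [Fin.zero_ne_one_of_two_le hn], by simp, by simp, rfl⟩

theorem edgeMetricDim_eq_three (hn : 3 ≤ n) : edgeMetricDim (GP n 1) = 3 :=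
  sInf_ncard_eq_of_forall_le (Set.toFinite _) (ncard_u₀_u₁_v₀ (by omega))
    (isEdgeGenerator_u₀_u₁_v₀ hn) fun _ hT hPT => three_le_ncard_of_forall_not_pair
      (fun _ _ hST h => h.mono hST) (not_isEdgeGenerator_pair hn) hT hPT

theorem metricDim_eq_three_of_even (hn : 3 ≤ n) (hev : Even n) : metricDim (GP n 1) = 3 :=
  sInf_ncard_eq_of_forall_le (Set.toFinite _) (ncard_u₀_u₁_v₀ (by omega))
    (isResolving_u₀_u₁_v₀ (by omega)) fun _ hT hPT => three_le_ncard_of_forall_not_pair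
      (fun _ _ hST h => h.mono hST) (not_isResolving_pair_of_even hn hev) hT hPT

theorem metricDim_eq_two_of_odd (hn : 3 ≤ n) (hodd : Odd n) : metricDim (GP n 1) = 2 := by
  obtain ⟨m, rfl⟩ := hodd
  let c : Fin (2 * m + 1) := ⟨m, by omega⟩
  exact sInf_ncard_eq_of_forall_le (Set.toFinite _)
    (Set.ncard_pair (by simp [c, Fin.ext_iff]; omega))
    (isResolving_u₀_uc_of_two_mul_add_one_eq (by omega) (c := c) rfl)
    fun _ hT hPT => two_le_ncard_of_forall_not_singleton (fun _ _ hST h => h.mono hST)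
      (not_isResolving_singleton hn) hT hPT

end Prism

/-- For even `n = 2t` (`t ≥ 2`), `β_E(GP(n,1)) = β(GP(n,1)) = 3`;
for odd `n = 2t+1` (`t ≥ 1`), `β_E(GP(n,1)) = 3 > β(GP(n,1)) = 2`. -/
theorem stmt6 :
    (∀ t : ℕ, 2 ≤ t →
      edgeMetricDim (GP (2 * t) 1) = 3 ∧ metricDim (GP (2 * t) 1) = 3) ∧
    (∀ t : ℕ, 1 ≤ t →
      edgeMetricDim (GP (2 * t + 1) 1) = 3 ∧ metricDim (GP (2 * t + 1) 1) = 2 ∧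
        metricDim (GP (2 * t + 1) 1) < edgeMetricDim (GP (2 * t + 1) 1)) := by
  refine ⟨fun t ht => ?_, fun t ht => ?_⟩
  · have : NeZero (2 * t) := ⟨by omega⟩
    exact ⟨Prism.edgeMetricDim_eq_three (by omega),
      Prism.metricDim_eq_three_of_even (by omega) (even_two_mul t)⟩
  · have : NeZero (2 * t + 1) := ⟨by omega⟩
    have hβE := Prism.edgeMetricDim_eq_three (n := 2 * t + 1) (by omega)
    have hβ := Prism.metricDim_eq_two_of_odd (n := 2 * t + 1) (by omega) (odd_two_mul_add_one t)
    exact ⟨hβE, hβ, by omega⟩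
end
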